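/- arXiv:2504.21845 — 5 statements merged into one kernel-verified Lean document; each statement's English description precedes it below -/
import Mathlib

section
/- Let H₁ be an r₁×n₁ matrix and H₂ an r₂×n₂ matrix over F₂. Define H_X = ( I_{n₁} ⊗ H₂ | H₁ᵀ ⊗ I_{r₂} ) (an (n₁·r₂) × (n₁·n₂ + r₁·r₂) matrix) and H_Z = ( H₁ ⊗ I_{n₂} | I_{r₁} ⊗ H₂ᵀ ) (an (r₁·n₂) × (n₁·n₂ + r₁·r₂) matrix), where ⊗ denotes the Kronecker product and ( A | B ) denotes horizontal block concatenation. Then H_X · H_Zᵀ = 0. -/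
open Matrix Kronecker

/-- Each of the two blocks of `H_X H_Zᵀ` equals `H₁ᵀ ⊗ H₂`, by the mixed-product property of `⊗ₖ`. -/
theorem fromCols_kronecker_mul_transpose_fromCols_kronecker
    {R m₁ n₁ m₂ n₂ : Type*} [CommSemiring R]
    [Fintype m₁] [Fintype n₁] [Fintype m₂] [Fintype n₂]
    [DecidableEq m₁] [DecidableEq n₁] [DecidableEq m₂] [DecidableEq n₂]
    (H₁ : Matrix m₁ n₁ R) (H₂ : Matrix m₂ n₂ R) :
    fromCols ((1 : Matrix n₁ n₁ R) ⊗ₖ H₂) (H₁ᵀ ⊗ₖ (1 : Matrix m₂ m₂ R)) *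
        (fromCols (H₁ ⊗ₖ (1 : Matrix n₂ n₂ R)) ((1 : Matrix m₁ m₁ R) ⊗ₖ H₂ᵀ))ᵀ =
      H₁ᵀ ⊗ₖ H₂ + H₁ᵀ ⊗ₖ H₂ := by
  simp only [transpose_fromCols, fromCols_mul_fromRows, ← kroneckerMap_transpose, transpose_one,
    transpose_transpose, ← mul_kronecker_mul, Matrix.one_mul, Matrix.mul_one]

/-- The hypergraph product construction satisfies the CSS condition `H_X * H_Zᵀ = 0`. -/
theorem hgp_css_condition (r₁ n₁ r₂ n₂ : ℕ)
    (H₁ : Matrix (Fin r₁) (Fin n₁) (ZMod 2))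
    (H₂ : Matrix (Fin r₂) (Fin n₂) (ZMod 2)) :
    (Matrix.fromCols ((1 : Matrix (Fin n₁) (Fin n₁) (ZMod 2)) ⊗ₖ H₂)
        (H₁ᵀ ⊗ₖ (1 : Matrix (Fin r₂) (Fin r₂) (ZMod 2)))) *
      (Matrix.fromCols (H₁ ⊗ₖ (1 : Matrix (Fin n₂) (Fin n₂) (ZMod 2)))
        ((1 : Matrix (Fin r₁) (Fin r₁) (ZMod 2)) ⊗ₖ H₂ᵀ))ᵀ = 0 := by
  rw [fromCols_kronecker_mul_transpose_fromCols_kronecker]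
  ext i j
  exact CharTwo.add_self_eq_zero _
end

section
/- Let H be an m×n matrix over F₂, and let H_X = ( Iₙ ⊗ H | Hᵀ ⊗ Iₘ ) and H_Z = ( H ⊗ Iₙ | Iₘ ⊗ Hᵀ ) be the check matrices of the hypergraph product code HGP(H,H), each with n² + m² columns. Then dim ker(H_X) + dim ker(H_Z) ≥ (n² + m²) + (n − m)², where ker denotes the kernel of the linear map x ↦ H_X x (respectively x ↦ H_Z x) on F₂^{n²+m²}. Equivalently, the number of logical qubits k = dim ker(H_X) + dim ker(H_Z) − (n² + m²) of the CSS code satisfies k ≥ (n − m)². -/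
open Matrix Kronecker

/-! Both check matrices have `n * m` rows, so by rank–nullity each kernel has dimension at least
`n² + m² - n * m`, and `2 (n² + m² - n * m) = (n² + m²) + (n - m)²`. -/

lemma Matrix.card_le_finrank_ker_mulVecLin_add_card {K α β : Type*} [Field K] [Fintype α]
    [Fintype β] (M : Matrix α β K) :
    Fintype.card β ≤ Module.finrank K (LinearMap.ker M.mulVecLin) + Fintype.card α := by
  have rank_nullity := LinearMap.finrank_range_add_finrank_ker M.mulVecLin
  have rank_le : Module.finrank K (LinearMap.range M.mulVecLin) ≤ Fintype.card α :=
    M.rank_le_card_height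
  rw [Module.finrank_fintype_fun_eq_card] at rank_nullity
  omega

/-- The number of logical qubits of the hypergraph product code `HGP(H,H)` satisfies
`k = dim ker H_X + dim ker H_Z − (n² + m²) ≥ (n − m)²`. -/
theorem hgp_dimension_bound (m n : ℕ) (H : Matrix (Fin m) (Fin n) (ZMod 2))
    (kX kZ : ℕ)
    (hkX : kX = Module.finrank (ZMod 2)
        (LinearMap.ker (Matrix.mulVecLin
          (Matrix.fromCols ((1 : Matrix (Fin n) (Fin n) (ZMod 2)) ⊗ₖ H)
            (Hᵀ ⊗ₖ (1 : Matrix (Fin m) (Fin m) (ZMod 2)))))))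
    (hkZ : kZ = Module.finrank (ZMod 2)
        (LinearMap.ker (Matrix.mulVecLin
          (Matrix.fromCols (H ⊗ₖ (1 : Matrix (Fin n) (Fin n) (ZMod 2)))
            ((1 : Matrix (Fin m) (Fin m) (ZMod 2)) ⊗ₖ Hᵀ))))) :
    ((kX : ℤ) + (kZ : ℤ)) ≥ ((n^2 + m^2 : ℕ) : ℤ) + ((n : ℤ) - (m : ℤ))^2 := by
  have hX := (Matrix.fromCols ((1 : Matrix (Fin n) (Fin n) (ZMod 2)) ⊗ₖ H)
    (Hᵀ ⊗ₖ (1 : Matrix (Fin m) (Fin m) (ZMod 2)))).card_le_finrank_ker_mulVecLin_add_card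
  have hZ := (Matrix.fromCols (H ⊗ₖ (1 : Matrix (Fin n) (Fin n) (ZMod 2)))
    ((1 : Matrix (Fin m) (Fin m) (ZMod 2)) ⊗ₖ Hᵀ)).card_le_finrank_ker_mulVecLin_add_card
  simp only [← hkX, ← hkZ, Fintype.card_sum, Fintype.card_prod, Fintype.card_fin] at hX hZ
  zify at hX hZ
  push_cast
  linear_combination hX + hZ
end

section
/- Let H be an m×n matrix over F₂ and let H_Z = ( H ⊗ Iₙ | Iₘ ⊗ Hᵀ ) be the Z-check matrix of HGP(H,H), with columns indexed by V_Q = (Fin n × Fin n) ⊕ (Fin m × Fin m) and rows indexed by Fin m × Fin n, so that H_Z[(c,v), (v₁,v₂)] = H[c,v₁] if v₂ = v and 0 otherwise, and H_Z[(c,v), (c₁,c₂)] = H[c₂,v] if c₁ = c and 0 otherwise. If S ⊆ Fin n is a stopping set for H, then for every v ∈ Fin n the set S × {v} ⊆ Fin n × Fin n (viewed as a subset of V_Q of V²-qubits) is a stopping set for H_Z. -/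
open Matrix Kronecker Finset

/-- The Z-check matrix `H_Z = ( H ⊗ Iₙ | Iₘ ⊗ Hᵀ )` of `HGP(H,H)`, with rows indexed by
`Fin m × Fin n` and columns indexed by the qubits `(Fin n × Fin n) ⊕ (Fin m × Fin m)`. -/
def hgpHZ (m n : ℕ) (H : Matrix (Fin m) (Fin n) (ZMod 2)) :
    Matrix (Fin m × Fin n) ((Fin n × Fin n) ⊕ (Fin m × Fin m)) (ZMod 2) :=
  Matrix.fromCols (H ⊗ₖ (1 : Matrix (Fin n) (Fin n) (ZMod 2)))
    ((1 : Matrix (Fin m) (Fin m) (ZMod 2)) ⊗ₖ Hᵀ)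

lemma hgpHZ_apply_inl {m n : ℕ} (H : Matrix (Fin m) (Fin n) (ZMod 2)) (r : Fin m × Fin n)
    (v₁ v₂ : Fin n) :
    hgpHZ m n H r (Sum.inl (v₁, v₂)) = if r.2 = v₂ then H r.1 v₁ else 0 := by
  simp [hgpHZ, one_apply]

/-- If `S` is a stopping set for `H`, then for every `v` the horizontal copy
`S × {v}` of `S` among the V²-qubits is a stopping set for `H_Z`. -/
theorem horizontal_stopping_set (m n : ℕ) (H : Matrix (Fin m) (Fin n) (ZMod 2))
    (S : Finset (Fin n))
    (hS : ∀ c : Fin m, (S.filter (fun v => H c v ≠ 0)).card ≠ 1)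
    (v : Fin n) (r : Fin m × Fin n) :
    ((S.image (fun v₁ => (Sum.inl (v₁, v) : (Fin n × Fin n) ⊕ (Fin m × Fin m)))).filter
        (fun q => hgpHZ m n H r q ≠ 0)).card ≠ 1 := by
  rw [filter_image, card_image_of_injective _ fun _ _ h => (Prod.mk.inj (Sum.inl.inj h)).1]
  simp only [hgpHZ_apply_inl]
  by_cases hr : r.2 = v
  · simpa only [hr, if_true] using hS r.1
  · simp [hr]
end

section
/- Let H be an m×n matrix over F₂ and let H_Z = ( H ⊗ Iₙ | Iₘ ⊗ Hᵀ ) be the Z-check matrix of HGP(H,H), with columns indexed by V_Q = (Fin n × Fin n) ⊕ (Fin m × Fin m) and rows indexed by Fin m × Fin n, so that H_Z[(c,v), (v₁,v₂)] = H[c,v₁] if v₂ = v and 0 otherwise, and H_Z[(c,v), (c₁,c₂)] = H[c₂,v] if c₁ = c and 0 otherwise. If S ⊆ Fin m is a stopping set for the transpose matrix Hᵀ (whose rows are indexed by Fin n and columns by Fin m), then for every c ∈ Fin m the set {c} × S ⊆ Fin m × Fin m (viewed as a subset of V_Q of C²-qubits) is a stopping set for H_Z. -/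
open Matrix Kronecker Finset

/-! On the C²-qubits of the column `c`, every row of `H_Z` is either zero or a row of `Hᵀ`,
so a stopping set of `Hᵀ` copied into that column meets every check in zero or at least two
qubits. -/

section StoppingSet

variable {ι ι' κ κ' R : Type*} [DecidableEq R]

def Matrix.IsStoppingSet [Zero R] (A : Matrix ι κ R) (S : Finset κ) : Prop :=
  ∀ i, #{j ∈ S | A i j ≠ 0} ≠ 1

theorem Matrix.isStoppingSet_image_iff [Zero R] [DecidableEq κ'] (A : Matrix ι κ' R)
    {e : κ → κ'} (he : Function.Injective e) (S : Finset κ) :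
    A.IsStoppingSet (S.image e) ↔ (A.submatrix id e).IsStoppingSet S := by
  simp only [IsStoppingSet, filter_image, card_image_of_injective _ he, submatrix_apply, id]
  rfl

theorem Finset.card_filter_mul_ne_zero [MulZeroClass R] [NoZeroDivisors R] (S : Finset κ)
    (a : R) (f : κ → R) :
    #{j ∈ S | a * f j ≠ 0} = if a = 0 then 0 else #{j ∈ S | f j ≠ 0} := by
  split_ifs with ha
  · simp [ha]
  · simp only [ne_eq, mul_eq_zero, ha, false_or]

theorem Matrix.IsStoppingSet.of_row_eq_mul [MulZeroClass R] [NoZeroDivisors R]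
    {A : Matrix ι κ R} {B : Matrix ι' κ R} {S : Finset κ} (hS : A.IsStoppingSet S)
    (hB : ∀ i', ∃ a i, ∀ j, B i' j = a * A i j) : B.IsStoppingSet S := by
  intro i'
  obtain ⟨a, i, hrow⟩ := hB i'
  simp only [hrow, card_filter_mul_ne_zero]
  split_ifs
  · exact zero_ne_one
  · exact hS i

end StoppingSet

theorem hgpHZ_apply_inr (m n : ℕ) (H : Matrix (Fin m) (Fin n) (ZMod 2)) (r : Fin m × Fin n)
    (q : Fin m × Fin m) :
    hgpHZ m n H r (Sum.inr q) = (1 : Matrix (Fin m) (Fin m) (ZMod 2)) r.1 q.1 * Hᵀ r.2 q.2 :=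
  rfl

/-- If `S` is a stopping set for the transpose matrix `Hᵀ`, then for every `c` the
vertical copy `{c} × S` of `S` among the C²-qubits is a stopping set for `H_Z`. -/
theorem vertical_stopping_set (m n : ℕ) (H : Matrix (Fin m) (Fin n) (ZMod 2))
    (S : Finset (Fin m))
    (hS : ∀ v : Fin n, (S.filter (fun c => Hᵀ v c ≠ 0)).card ≠ 1)
    (c : Fin m) (r : Fin m × Fin n) :
    ((S.image (fun c₂ => (Sum.inr (c, c₂) : (Fin n × Fin n) ⊕ (Fin m × Fin m)))).filter
        (fun q => hgpHZ m n H r q ≠ 0)).card ≠ 1 := by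
  let column (c₂ : Fin m) : (Fin n × Fin n) ⊕ (Fin m × Fin m) := Sum.inr (c, c₂)
  have hinj : Function.Injective column := fun a b h => by simpa [column] using h
  have hcolumn : ((hgpHZ m n H).submatrix id column).IsStoppingSet S :=
    IsStoppingSet.of_row_eq_mul hS fun r' =>
      ⟨(1 : Matrix (Fin m) (Fin m) (ZMod 2)) r'.1 c, r'.2,
        fun c₂ => hgpHZ_apply_inr m n H r' (c, c₂)⟩
  exact (isStoppingSet_image_iff (hgpHZ m n H) hinj S).mpr hcolumn r
end

section
/- Let H be an m×n matrix over F₂ such that every x ∈ F₂ⁿ with Hx = 0 and x ≠ 0 has Hamming weight at least d, and every z ∈ F₂^m with Hᵀz = 0 and z ≠ 0 has Hamming weight at least dᵀ. Let H_X = ( Iₙ ⊗ H | Hᵀ ⊗ Iₘ ) and H_Z = ( H ⊗ Iₙ | Iₘ ⊗ Hᵀ ) be the check matrices of HGP(H,H), each with N = n² + m² columns. Then every x ∈ F₂^N with H_Z x = 0 that does not lie in the row space of H_X (the F₂-span of the rows of H_X) has Hamming weight at least min(d, dᵀ). -/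
/-!
Write `x = (vec X, vec Y)` with `X` an `n × n` and `Y` an `m × m` matrix. Then `H_Z x = 0` says
`X Hᵀ = Hᵀ Y`, and the row space of `H_X` consists of the pairs `(vec (Hᵀ Λ), vec (Λ Hᵀ))`.
If `x` has weight below `min(d, dᵀ)`, then for `z ∈ ker H` the vector `z X` lies in `ker H` again
and has weight at most `|X| < d`, so `X` kills `ker H` from the left; likewise `Y` kills `ker Hᵀ`.
These two conditions say exactly that `X = Hᵀ Λ` and `Y = Λ Hᵀ` are solvable: with a generalized
inverse `G` of `Hᵀ`, the matrix `Λ = G X + Y G - G Hᵀ Y G` works.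
-/

open Matrix Kronecker Finset

/-- The X-check matrix `H_X = ( Iₙ ⊗ H | Hᵀ ⊗ Iₘ )` of `HGP(H,H)`. -/
def hgpHX (m n : ℕ) (H : Matrix (Fin m) (Fin n) (ZMod 2)) :
    Matrix (Fin n × Fin m) ((Fin n × Fin n) ⊕ (Fin m × Fin m)) (ZMod 2) :=
  Matrix.fromCols ((1 : Matrix (Fin n) (Fin n) (ZMod 2)) ⊗ₖ H)
    (Hᵀ ⊗ₖ (1 : Matrix (Fin m) (Fin m) (ZMod 2)))

namespace LinearMap

variable {K V W : Type*} [Field K] [AddCommGroup V] [Module K V] [AddCommGroup W] [Module K W]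

theorem exists_comp_comp_eq_self (f : V →ₗ[K] W) : ∃ g : W →ₗ[K] V, f ∘ₗ g ∘ₗ f = f := by
  obtain ⟨s, hs⟩ := f.rangeRestrict.exists_rightInverse_of_surjective f.range_rangeRestrict
  obtain ⟨r, hr⟩ := (LinearMap.range f).subtype.exists_leftInverse_of_injective
    (Submodule.ker_subtype _)
  refine ⟨s ∘ₗ r, ?_⟩
  calc f ∘ₗ (s ∘ₗ r) ∘ₗ f
      = (LinearMap.range f).subtype ∘ₗ (f.rangeRestrict ∘ₗ s) ∘ₗ (r ∘ₗ
          (LinearMap.range f).subtype) ∘ₗ f.rangeRestrict := rfl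
    _ = f := by rw [hs, hr]; rfl

end LinearMap

namespace Matrix

variable {l m n R : Type*} [Fintype m] [Fintype n]

theorem exists_mul_mul_eq_self [DecidableEq m] [DecidableEq n] {F : Type*} [Field F]
    (M : Matrix m n F) : ∃ G : Matrix n m F, M * G * M = M := by
  obtain ⟨g, hg⟩ := (toLin' M).exists_comp_comp_eq_self
  refine ⟨LinearMap.toMatrix' g, toLin'.injective ?_⟩
  rwa [toLin'_mul, toLin'_mul, toLin'_toMatrix']

section Ring

variable [Ring R] {M : Matrix m n R} {G : Matrix n m R}

theorem mul_mul_eq_of_ker_le (hG : M * G * M = M) {Y : Matrix l n R}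
    (hY : ∀ y, M *ᵥ y = 0 → Y *ᵥ y = 0) : Y * G * M = Y := by
  refine ext_iff_mulVec.2 fun v => ?_
  have hker : M *ᵥ (v - (G * M) *ᵥ v) = 0 := by
    rw [mulVec_sub, mulVec_mulVec, ← Matrix.mul_assoc, hG, sub_self]
  have := hY _ hker
  rwa [mulVec_sub, mulVec_mulVec, sub_eq_zero, eq_comm, ← Matrix.mul_assoc] at this

theorem mul_mul_eq_of_leftKer_le (hG : M * G * M = M) {X : Matrix m l R}
    (hX : ∀ z, z ᵥ* M = 0 → z ᵥ* X = 0) : M * G * X = X := by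
  refine ext_iff_vecMul.2 fun v => ?_
  have hker : (v - v ᵥ* (M * G)) ᵥ* M = 0 := by
    rw [sub_vecMul, vecMul_vecMul, hG, sub_self]
  have := hX _ hker
  rwa [sub_vecMul, vecMul_vecMul, sub_eq_zero, eq_comm] at this

end Ring

section Hamming

variable [DecidableEq R]

theorem hammingNorm_sumElim [Zero R] {α β : Type*} [Fintype α] [Fintype β] (a : α → R)
    (b : β → R) : hammingNorm (Sum.elim a b) = hammingNorm a + hammingNorm b := by
  simp only [hammingNorm, Finset.card_filter, Fintype.sum_sum_type]
  rfl

variable [NonUnitalSemiring R]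

theorem hammingNorm_mulVec_le (M : Matrix m n R) (v : n → R) :
    hammingNorm (M *ᵥ v) ≤ hammingNorm M.vec := by
  classical
  refine (card_le_card fun i hi => ?_).trans (card_image_le (f := Prod.snd))
  obtain ⟨j, hj⟩ : ∃ j, M i j ≠ 0 := by
    by_contra! h
    simp [mulVec, dotProduct, h] at hi
  exact mem_image.2 ⟨(j, i), mem_filter.2 ⟨mem_univ _, hj⟩, rfl⟩

theorem hammingNorm_vecMul_le (M : Matrix m n R) (v : m → R) :
    hammingNorm (v ᵥ* M) ≤ hammingNorm M.vec := by
  classical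
  refine (card_le_card fun j hj => ?_).trans (card_image_le (f := Prod.fst))
  obtain ⟨i, hi⟩ : ∃ i, M i j ≠ 0 := by
    by_contra! h
    simp [vecMul, dotProduct, h] at hj
  exact mem_image.2 ⟨(j, i), mem_filter.2 ⟨mem_univ _, hi⟩, rfl⟩

variable {d : ℕ} {M : Matrix m n R} {X : Matrix m m R} {Y : Matrix n n R}

theorem vecMul_eq_zero_of_hammingNorm_lt (hXY : X * M = M * Y)
    (hd : ∀ z, z ᵥ* M = 0 → z ≠ 0 → d ≤ hammingNorm z) (hX : hammingNorm X.vec < d)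
    {z : m → R} (hz : z ᵥ* M = 0) : z ᵥ* X = 0 := by
  by_contra hzX
  have hker : z ᵥ* X ᵥ* M = 0 := by rw [vecMul_vecMul, hXY, ← vecMul_vecMul, hz, zero_vecMul]
  exact ((hd _ hker hzX).trans (hammingNorm_vecMul_le X z)).not_gt hX

theorem mulVec_eq_zero_of_hammingNorm_lt (hXY : X * M = M * Y)
    (hd : ∀ y, M *ᵥ y = 0 → y ≠ 0 → d ≤ hammingNorm y) (hY : hammingNorm Y.vec < d)
    {y : n → R} (hy : M *ᵥ y = 0) : Y *ᵥ y = 0 := by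
  by_contra hYy
  have hker : M *ᵥ Y *ᵥ y = 0 := by rw [mulVec_mulVec, ← hXY, ← mulVec_mulVec, hy, mulVec_zero]
  exact ((hd _ hker hYy).trans (hammingNorm_mulVec_le Y y)).not_gt hY

end Hamming

theorem exists_mul_eq_and_mul_eq [DecidableEq m] [DecidableEq n] {F : Type*} [Field F]
    {M : Matrix m n F} {X : Matrix m m F} {Y : Matrix n n F} (hXY : X * M = M * Y)
    (hX : ∀ z, z ᵥ* M = 0 → z ᵥ* X = 0) (hY : ∀ y, M *ᵥ y = 0 → Y *ᵥ y = 0) :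
    ∃ Λ : Matrix n m F, M * Λ = X ∧ Λ * M = Y := by
  obtain ⟨G, hG⟩ := M.exists_mul_mul_eq_self
  have hGX : M * G * X = X := mul_mul_eq_of_leftKer_le hG hX
  have hYG : Y * G * M = Y := mul_mul_eq_of_ker_le hG hY
  refine ⟨G * X + Y * G - G * M * Y * G, ?_, ?_⟩
  · rw [Matrix.mul_sub, Matrix.mul_add]
    simp only [← Matrix.mul_assoc, hG, hGX]
    abel
  · have hGMY : G * M * Y * G * M = G * M * Y := by
      simp only [Matrix.mul_assoc] at hYG ⊢
      rw [hYG]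
    rw [Matrix.sub_mul, Matrix.add_mul, hGMY, hYG, Matrix.mul_assoc, hXY, ← Matrix.mul_assoc]
    abel

end Matrix

section HypergraphProduct

variable {m n : ℕ} (H : Matrix (Fin m) (Fin n) (ZMod 2))

theorem hgpHZ_mulVec_sumElim_vec (X : Matrix (Fin n) (Fin n) (ZMod 2))
    (Y : Matrix (Fin m) (Fin m) (ZMod 2)) :
    hgpHZ m n H *ᵥ Sum.elim X.vec Y.vec = (X * Hᵀ + Hᵀ * Y).vec := by
  rw [hgpHZ, fromCols_mulVec_sumElim, kronecker_mulVec_vec, kronecker_mulVec_vec, vec_add,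
    Matrix.one_mul, transpose_one, Matrix.mul_one]

theorem vec_vecMul_hgpHX (Λ : Matrix (Fin m) (Fin n) (ZMod 2)) :
    Λ.vec ᵥ* hgpHX m n H = Sum.elim (Hᵀ * Λ).vec (Λ * Hᵀ).vec := by
  rw [hgpHX, vecMul_fromCols, vec_vecMul_kronecker, vec_vecMul_kronecker, Matrix.mul_one,
    transpose_one, Matrix.one_mul]

end HypergraphProduct

/-- Tillich–Zémor distance bound for `HGP(H,H)`: if every nonzero codeword of `ker H`
has weight at least `d` and every nonzero codeword of `ker Hᵀ` has weight at least `dᵀ`,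
then every element of `ker H_Z` outside the row space of `H_X` has weight at least
`min(d, dᵀ)`. -/
theorem hgp_distance_bound (m n d dT : ℕ) (H : Matrix (Fin m) (Fin n) (ZMod 2))
    (hd : ∀ x : Fin n → ZMod 2, H.mulVec x = 0 → x ≠ 0 →
      d ≤ (univ.filter (fun v => x v ≠ 0)).card)
    (hdT : ∀ z : Fin m → ZMod 2, Hᵀ.mulVec z = 0 → z ≠ 0 →
      dT ≤ (univ.filter (fun c => z c ≠ 0)).card)
    (x : ((Fin n × Fin n) ⊕ (Fin m × Fin m)) → ZMod 2)
    (hx : (hgpHZ m n H).mulVec x = 0)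
    (hxrow : x ∉ Submodule.span (ZMod 2) (Set.range (fun g => hgpHX m n H g))) :
    min d dT ≤ (univ.filter (fun q => x q ≠ 0)).card := by
  obtain ⟨X, hX⟩ := vec_bijective.2 (x ∘ Sum.inl)
  obtain ⟨Y, hY⟩ := vec_bijective.2 (x ∘ Sum.inr)
  obtain rfl : x = Sum.elim X.vec Y.vec := by rw [hX, hY, Sum.elim_comp_inl_inr]
  by_contra! hlt
  change hammingNorm (Sum.elim X.vec Y.vec) < min d dT at hlt
  rw [hammingNorm_sumElim, lt_min_iff] at hlt
  have hXY : X * Hᵀ = Hᵀ * Y := by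
    rwa [hgpHZ_mulVec_sumElim_vec, vec_eq_zero_iff, add_eq_zero_iff_eq_neg,
      ZModModule.neg_eq_self] at hx
  have hXker : ∀ z, z ᵥ* Hᵀ = 0 → z ᵥ* X = 0 := fun _ =>
    vecMul_eq_zero_of_hammingNorm_lt hXY (fun z hz => hd z (by rwa [vecMul_transpose] at hz))
      (by omega)
  have hYker : ∀ y, Hᵀ *ᵥ y = 0 → Y *ᵥ y = 0 := fun _ =>
    mulVec_eq_zero_of_hammingNorm_lt hXY hdT (by omega)
  obtain ⟨Λ, rfl, rfl⟩ := exists_mul_eq_and_mul_eq hXY hXker hYker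
  refine hxrow ?_
  rw [← row_def, ← range_vecMulLinear]
  exact ⟨Λ.vec, vec_vecMul_hgpHX H Λ⟩
end
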